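/- Fix d ≥ 1 and an integer L ≥ d. For any x ∈ (0,1)^d, the number of pairs (ℓ, i), where ℓ = (ℓ₁,…,ℓ_d) has each ℓ_j ≥ 1 and ℓ₁ + ⋯ + ℓ_d ≤ L, and i = (i₁,…,i_d) has each i_j odd with 1 ≤ i_j ≤ 2^{ℓ_j} − 1, such that x_j ∈ ((i_j−1)·2^{−ℓ_j}, (i_j+1)·2^{−ℓ_j}) for all j, is at most the binomial coefficient C(L, d). -/
import Mathlib

open Finset

/-- The set of sparse-grid index pairs `(ℓ, i)` with total level at most `L` whose
open dyadic cell contains the point `x ∈ (0,1)^d`. -/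
def sparseGridCellsContaining (d L : ℕ) (x : Fin d → ℝ) :
    Set ((Fin d → ℕ) × (Fin d → ℕ)) :=
  {p | (∀ j, 1 ≤ p.1 j) ∧ (∑ j, p.1 j) ≤ L ∧
       (∀ j, Odd (p.2 j) ∧ 1 ≤ p.2 j ∧ p.2 j ≤ 2 ^ p.1 j - 1) ∧
       (∀ j, x j ∈ Set.Ioo (((p.2 j : ℝ) - 1) / 2 ^ p.1 j) (((p.2 j : ℝ) + 1) / 2 ^ p.1 j))}

/-- Partial sums of a level vector. -/
private def psum {d : ℕ} (ℓ : Fin d → ℕ) (j : Fin d) : ℕ := ∑ k ∈ Finset.Iic j, ℓ k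

private lemma psum_strictMono {d : ℕ} {ℓ : Fin d → ℕ} (h : ∀ j, 1 ≤ ℓ j) :
    StrictMono (psum ℓ) := by
  intro a b hab
  have hb : b ∉ Finset.Iic a := by simp [hab.not_ge]
  have hsub : Finset.Iic a ∪ {b} ⊆ Finset.Iic b := by
    intro k hk
    simp only [Finset.mem_union, Finset.mem_singleton, Finset.mem_Iic] at hk ⊢
    rcases hk with hk | rfl
    · exact hk.trans hab.le
    · exact le_rfl
  calc psum ℓ a < psum ℓ a + ℓ b := by have := h b; omega
    _ = ∑ k ∈ Finset.Iic a ∪ {b}, ℓ k := by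
        rw [Finset.sum_union (by simp [hb])]; simp [psum]
    _ ≤ psum ℓ b := Finset.sum_le_sum_of_subset hsub

private lemma psum_inj {d : ℕ} {ℓ₁ ℓ₂ : Fin d → ℕ} (h : psum ℓ₁ = psum ℓ₂) : ℓ₁ = ℓ₂ := by
  have key : ∀ n : ℕ, ∀ j : Fin d, (j : ℕ) = n → ℓ₁ j = ℓ₂ j := by
    intro n
    induction n using Nat.strong_induction_on with
    | _ n ih =>
      intro j hj
      have hIio : ∑ k ∈ Finset.Iio j, ℓ₁ k = ∑ k ∈ Finset.Iio j, ℓ₂ k := by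
        refine Finset.sum_congr rfl fun k hk => ?_
        have hk1 : k < j := Finset.mem_Iio.1 hk
        have hk2 : (k : ℕ) < (j : ℕ) := Fin.lt_def.mp hk1
        exact ih (k : ℕ) (by omega) k rfl
      have h1 : psum ℓ₁ j = ℓ₁ j + ∑ k ∈ Finset.Iio j, ℓ₁ k := by
        rw [psum, ← Finset.Iio_insert, Finset.sum_insert (by simp)]
      have h2 : psum ℓ₂ j = ℓ₂ j + ∑ k ∈ Finset.Iio j, ℓ₂ k := by
        rw [psum, ← Finset.Iio_insert, Finset.sum_insert (by simp)]
      have := congrFun h j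
      omega
  funext j; exact key (j : ℕ) j rfl

/-- For `d ≥ 1`, `L ≥ d`, and any `x ∈ (0,1)^d`, the number of
sparse-grid index pairs `(ℓ, i)` with `ℓ₁ + ⋯ + ℓ_d ≤ L` whose open dyadic cell
contains `x` is at most the binomial coefficient `C(L, d)`. -/
theorem sparse_grid_cells_containing_card_le
    (d L : ℕ) (hd : 1 ≤ d) (hL : d ≤ L)
    (x : Fin d → ℝ) (hx : ∀ j, x j ∈ Set.Ioo (0 : ℝ) 1) :
    (sparseGridCellsContaining d L x).Finite ∧
    (sparseGridCellsContaining d L x).ncard ≤ Nat.choose L d := by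
  classical
  set S := sparseGridCellsContaining d L x with hS
  set T : Finset (Finset ℕ) := (Finset.Icc 1 L).powersetCard d with hT
  set F : ((Fin d → ℕ) × (Fin d → ℕ)) → Finset ℕ :=
    fun p => Finset.image (psum p.1) Finset.univ with hF
  -- F maps S into T
  have hmaps : ∀ p ∈ S, F p ∈ (T : Set (Finset ℕ)) := by
    rintro ⟨ℓ, i⟩ ⟨h1, h2, h3, h4⟩
    simp only [Finset.coe_sort_coe, Finset.mem_coe, hT, Finset.mem_powersetCard]
    constructor
    · intro s hs
      simp only [hF, Finset.mem_image, Finset.mem_univ, true_and] at hs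
      obtain ⟨j, rfl⟩ := hs
      simp only [Finset.mem_Icc]
      constructor
      · calc 1 ≤ ℓ j := h1 j
          _ ≤ psum ℓ j := Finset.single_le_sum (fun k _ => Nat.zero_le _) (by simp)
      · calc psum ℓ j ≤ ∑ k, ℓ k :=
              Finset.sum_le_sum_of_subset (Finset.subset_univ _)
          _ ≤ L := h2
    · rw [hF, Finset.card_image_of_injective _ (psum_strictMono h1).injective]
      simp
  -- F is injective on S
  have hinj : Set.InjOn F S := by
    rintro ⟨ℓ₁, i₁⟩ ⟨h1, h2, h3, h4⟩ ⟨ℓ₂, i₂⟩ ⟨g1, g2, g3, g4⟩ hFeq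
    have hcard : (F (ℓ₁, i₁)).card = d := by
      rw [hF, Finset.card_image_of_injective _ (psum_strictMono h1).injective]; simp
    have e1 : psum ℓ₁ = (F (ℓ₁, i₁)).orderEmbOfFin hcard :=
      Finset.orderEmbOfFin_unique hcard (fun k => by simp [hF]) (psum_strictMono h1)
    have e2 : psum ℓ₂ = (F (ℓ₁, i₁)).orderEmbOfFin hcard := by
      refine Finset.orderEmbOfFin_unique hcard (fun k => ?_) (psum_strictMono g1)
      rw [hFeq]; simp [hF]
    have hℓ : ℓ₁ = ℓ₂ := psum_inj (e1.trans e2.symm)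
    subst hℓ
    have hi : i₁ = i₂ := by
      funext j
      have hx1 := h4 j
      have hx2 := g4 j
      simp only [Set.mem_Ioo] at hx1 hx2
      have hpow : (0 : ℝ) < 2 ^ ℓ₁ j := by positivity
      -- a - 1 < b + 1 and b - 1 < a + 1 over ℝ
      have hab : ((i₁ j : ℝ) - 1) / 2 ^ ℓ₁ j < ((i₂ j : ℝ) + 1) / 2 ^ ℓ₁ j :=
        hx1.1.trans hx2.2
      have hba : ((i₂ j : ℝ) - 1) / 2 ^ ℓ₁ j < ((i₁ j : ℝ) + 1) / 2 ^ ℓ₁ j :=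
        hx2.1.trans hx1.2
      rw [div_lt_div_iff_of_pos_right hpow] at hab hba
      have hab' : (i₁ j : ℝ) < (i₂ j : ℝ) + 2 := by linarith
      have hba' : (i₂ j : ℝ) < (i₁ j : ℝ) + 2 := by linarith
      have hab'' : i₁ j < i₂ j + 2 := by exact_mod_cast hab'
      have hba'' : i₂ j < i₁ j + 2 := by exact_mod_cast hba'
      obtain ⟨m, hm⟩ := (h3 j).1
      obtain ⟨n, hn⟩ := (g3 j).1
      have hm' : i₁ j = 2 * m + 1 := hm
      have hn' : i₂ j = 2 * n + 1 := hn
      omega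
    rw [hi]
  -- conclude
  have hTfin : (T : Set (Finset ℕ)).Finite := T.finite_toSet
  have himg : (F '' S).Finite := hTfin.subset (by rintro _ ⟨p, hp, rfl⟩; exact hmaps p hp)
  have hfin : S.Finite := Set.Finite.of_finite_image himg hinj
  refine ⟨hfin, ?_⟩
  have hle : S.ncard ≤ (T : Set (Finset ℕ)).ncard :=
    Set.ncard_le_ncard_of_injOn F hmaps hinj hTfin
  have : (T : Set (Finset ℕ)).ncard = Nat.choose L d := by
    rw [Set.ncard_coe_finset, hT, Finset.card_powersetCard, Nat.card_Icc]
    simp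
  omega
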